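/- Let 0 ≤ r < m with m + r even and let f be an r-plateaued Boolean function in m variables. Write W_f(x) = (−1)^{g(x)}·2^{(m+r)/2} for x ∈ S_f (defining g : S_f → 𝔽₂) and for b ∈ 𝔽₂^m set f_b(x) = b·x + f(b) + g(x) for x ∈ S_f, with blocks B^{f_b} = {p ∈ S_f : f_b(p) = 1}. Then: (1) |S_f| = 2^{m−r}; (2) |B^{f_b}| = 2^{m−r−1} − 2^{(m−r−2)/2} for every b ∈ 𝔽₂^m; (3) every point p ∈ S_f lies in exactly 2^{m−1} − 2^{(m+r−2)/2} of the blocks B^{f_b}, b ∈ 𝔽₂^m; (4) every pair of distinct points p, q ∈ S_f lies in exactly 2^{m−2} − 2^{(m+r−2)/2} of these blocks; (5) for all a, b ∈ 𝔽₂^m, 2^{r+2}·|B^{f_a} ∩ B^{f_b}| = 2^m − 2^{(m+r+2)/2} + (−1)^{f(a)+f(b)}·C_f(a+b). -/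
import Mathlib


open Finset

/-- dot product on 𝔽₂^m -/
def dotp {m : ℕ} (a x : Fin m → ZMod 2) : ZMod 2 := ∑ i, a i * x i

/-- (−1)^a for a ∈ 𝔽₂, as an integer -/
def sgn (a : ZMod 2) : ℤ := if a = 0 then 1 else -1

/-- Walsh transform of f on a finite subset P of 𝔽₂^m -/
def walsh {m : ℕ} (P : Finset (Fin m → ZMod 2)) (f : (Fin m → ZMod 2) → ZMod 2)
    (u : Fin m → ZMod 2) : ℤ :=
  ∑ x ∈ P, sgn (f x + dotp u x)

/-- Walsh transform of f on all of 𝔽₂^m -/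
def walshF {m : ℕ} (f : (Fin m → ZMod 2) → ZMod 2) (u : Fin m → ZMod 2) : ℤ :=
  walsh Finset.univ f u


/-- The Walsh support S_f of a Boolean function, as a finset. -/
def walshSupp {m : ℕ} (f : (Fin m → ZMod 2) → ZMod 2) : Finset (Fin m → ZMod 2) :=
  Finset.univ.filter (fun a => walshF f a ≠ 0)

/-- The block B^{f_b} ⊆ S_f of the addition design, where f_b(x) = b·x + f(b) + g(x). -/
def addBlock {m : ℕ} (f g : (Fin m → ZMod 2) → ZMod 2) (b : Fin m → ZMod 2) :
    Finset (Fin m → ZMod 2) :=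
  (walshSupp f).filter (fun p => dotp b p + f b + g p = 1)

/-- The autocorrelation C_f(a). -/
def autocorr {m : ℕ} (f : (Fin m → ZMod 2) → ZMod 2) (a : Fin m → ZMod 2) : ℤ :=
  ∑ x : Fin m → ZMod 2, sgn (f x + f (x + a))



lemma sgn_add' (a b : ZMod 2) : sgn (a + b) = sgn a * sgn b := by revert a b; decide
lemma sgn_sq' (a : ZMod 2) : sgn a * sgn a = 1 := by revert a; decide
lemma sgn_add_one' (a : ZMod 2) : sgn (a + 1) = - sgn a := by revert a; decide
lemma vadd_self {m : ℕ} (v : Fin m → ZMod 2) : v + v = 0 := by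
  funext i; have h : ∀ a : ZMod 2, a + a = 0 := by decide
  exact h (v i)
lemma add_eq_zero_iff2 {m : ℕ} (x b : Fin m → ZMod 2) : x + b = 0 ↔ x = b := by
  constructor
  · intro h
    have h2 := congrArg (fun y => y + b) h
    simpa [add_assoc, vadd_self] using h2
  · rintro rfl; exact vadd_self _
lemma dotp_add_left {m : ℕ} (a b x : Fin m → ZMod 2) : dotp (a+b) x = dotp a x + dotp b x := by
  simp [dotp, add_mul, Finset.sum_add_distrib]
lemma dotp_add_right {m : ℕ} (a x y : Fin m → ZMod 2) : dotp a (x+y) = dotp a x + dotp a y := by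
  simp [dotp, mul_add, Finset.sum_add_distrib]
lemma dotp_comm {m : ℕ} (a x : Fin m → ZMod 2) : dotp a x = dotp x a := by
  simp [dotp, mul_comm]
lemma char_sum {m : ℕ} (c : Fin m → ZMod 2) :
    ∑ x : Fin m → ZMod 2, sgn (dotp c x) = if c = 0 then (2^m : ℤ) else 0 := by
  split_ifs with hc
  · subst hc
    simp [dotp, sgn, Finset.card_univ]
  · obtain ⟨i, hi⟩ : ∃ i, c i ≠ 0 := by
      by_contra h; push_neg at h; exact hc (funext fun i => h i)
    have hone : ∀ a : ZMod 2, a ≠ 0 → a = 1 := by decide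
    have hci : c i = 1 := hone _ hi
    set v : Fin m → ZMod 2 := Pi.single i 1 with hv
    have hdv : dotp c v = 1 := by
      simp [dotp, hv, Pi.single_apply, mul_ite, Finset.sum_ite_eq', hci]
    have key : ∑ x : Fin m → ZMod 2, sgn (dotp c x)
        = ∑ x : Fin m → ZMod 2, sgn (dotp c (x + v)) :=
      (Fintype.sum_equiv (Equiv.addRight v) _ _ (fun x => rfl)).symm
    have key2 : ∀ x : Fin m → ZMod 2, sgn (dotp c (x + v)) = - sgn (dotp c x) := by
      intro x; rw [dotp_add_right, hdv, sgn_add_one']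
    rw [Finset.sum_congr rfl (fun x _ => key2 x), Finset.sum_neg_distrib] at key
    linarith

lemma inversion {m : ℕ} (f : (Fin m → ZMod 2) → ZMod 2) (b : Fin m → ZMod 2) :
    ∑ u : Fin m → ZMod 2, walshF f u * sgn (dotp u b) = 2 ^ m * sgn (f b) := by
  have step : ∀ u : Fin m → ZMod 2, walshF f u * sgn (dotp u b)
      = ∑ x : Fin m → ZMod 2, sgn (f x) * sgn (dotp u (x + b)) := by
    intro u
    rw [walshF, walsh, Finset.sum_mul]
    refine Finset.sum_congr rfl fun x _ => ?_
    rw [dotp_add_right, sgn_add', sgn_add']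
    ring
  rw [Finset.sum_congr rfl fun u _ => step u, Finset.sum_comm]
  have inner : ∀ x : Fin m → ZMod 2,
      ∑ u : Fin m → ZMod 2, sgn (f x) * sgn (dotp u (x + b))
        = if x = b then 2 ^ m * sgn (f b) else 0 := by
    intro x
    rw [← Finset.mul_sum]
    have hc : ∀ u : Fin m → ZMod 2, dotp u (x+b) = dotp (x+b) u := fun u => dotp_comm _ _
    rw [Finset.sum_congr rfl fun u _ => congrArg sgn (hc u), char_sum]
    by_cases hx : x = b
    · subst hx; simp [vadd_self]
      ring
    · have hnz : x + b ≠ 0 := fun h => hx ((add_eq_zero_iff2 x b).mp h)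
      simp [hnz, hx]
  rw [Finset.sum_congr rfl fun x _ => inner x]
  simp

lemma autocorr_rel {m : ℕ} (f : (Fin m → ZMod 2) → ZMod 2) (c : Fin m → ZMod 2) :
    ∑ u : Fin m → ZMod 2, walshF f u ^ 2 * sgn (dotp u c) = 2 ^ m * autocorr f c := by
  have step : ∀ u : Fin m → ZMod 2, walshF f u ^ 2 * sgn (dotp u c)
      = ∑ x : Fin m → ZMod 2, ∑ y : Fin m → ZMod 2,
          sgn (f x) * sgn (f y) * sgn (dotp u (x + y + c)) := by
    intro u
    rw [sq, walshF, walsh, Finset.sum_mul_sum, Finset.sum_mul]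
    refine Finset.sum_congr rfl fun x _ => ?_
    rw [Finset.sum_mul]
    refine Finset.sum_congr rfl fun y _ => ?_
    rw [dotp_add_right, dotp_add_right, sgn_add', sgn_add', sgn_add', sgn_add']
    ring
  rw [Finset.sum_congr rfl fun u _ => step u, Finset.sum_comm]
  have swap2 : ∀ x : Fin m → ZMod 2,
      ∑ u : Fin m → ZMod 2, ∑ y : Fin m → ZMod 2,
          sgn (f x) * sgn (f y) * sgn (dotp u (x + y + c))
      = ∑ y : Fin m → ZMod 2, ∑ u : Fin m → ZMod 2,
          sgn (f x) * sgn (f y) * sgn (dotp u (x + y + c)) := fun x => Finset.sum_comm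
  rw [Finset.sum_congr rfl fun x _ => swap2 x]
  have inner : ∀ x y : Fin m → ZMod 2,
      ∑ u : Fin m → ZMod 2, sgn (f x) * sgn (f y) * sgn (dotp u (x + y + c))
        = if y = x + c then 2 ^ m * (sgn (f x) * sgn (f y)) else 0 := by
    intro x y
    rw [← Finset.mul_sum]
    have hc : ∀ u : Fin m → ZMod 2, dotp u (x+y+c) = dotp (x+y+c) u := fun u => dotp_comm _ _
    rw [Finset.sum_congr rfl fun u _ => congrArg sgn (hc u), char_sum]
    have hiff : x + y + c = 0 ↔ y = x + c := by
      rw [show x + y + c = y + (x + c) by ring, add_eq_zero_iff2]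
    by_cases hy : y = x + c
    · rw [if_pos (hiff.mpr hy), if_pos hy]; ring
    · rw [if_neg (fun h => hy (hiff.mp h)), if_neg hy]; ring
  have collapse : ∀ x : Fin m → ZMod 2,
      ∑ y : Fin m → ZMod 2, ∑ u : Fin m → ZMod 2,
          sgn (f x) * sgn (f y) * sgn (dotp u (x + y + c))
      = 2 ^ m * (sgn (f x) * sgn (f (x + c))) := by
    intro x
    rw [Finset.sum_congr rfl fun y _ => inner x y]
    simp
  rw [Finset.sum_congr rfl fun x _ => collapse x, autocorr, Finset.mul_sum]
  exact Finset.sum_congr rfl fun x _ => by rw [sgn_add']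

lemma notin_supp {m : ℕ} (f : (Fin m → ZMod 2) → ZMod 2) (u : Fin m → ZMod 2)
    (h : u ∉ walshSupp f) : walshF f u = 0 := by
  simpa [walshSupp] using h

lemma sum_supp_mul {m : ℕ} (f : (Fin m → ZMod 2) → ZMod 2) (t : (Fin m → ZMod 2) → ℤ) :
    ∑ u ∈ walshSupp f, walshF f u * t u = ∑ u : Fin m → ZMod 2, walshF f u * t u := by
  rw [walshSupp]
  exact Finset.sum_filter_of_ne fun x _ h => left_ne_zero_of_mul h

lemma sum_supp_sq {m : ℕ} (f : (Fin m → ZMod 2) → ZMod 2) (t : (Fin m → ZMod 2) → ℤ) :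
    ∑ u ∈ walshSupp f, walshF f u ^ 2 * t u = ∑ u : Fin m → ZMod 2, walshF f u ^ 2 * t u := by
  rw [walshSupp]
  refine Finset.sum_filter_of_ne fun x _ h => ?_
  intro h0
  exact h (by rw [h0]; ring)

lemma count_one {α : Type*} (T : Finset α) (e : α → ZMod 2) :
    2 * ((T.filter (fun p => e p = 1)).card : ℤ) = T.card - ∑ p ∈ T, sgn (e p) := by
  have key : ∀ a : ZMod 2, 2 * (if a = 1 then (1:ℤ) else 0) = 1 - sgn a := by decide
  rw [Finset.card_filter]
  push_cast
  rw [Finset.mul_sum, show ((T.card : ℤ)) = ∑ p ∈ T, (1:ℤ) by simp, ← Finset.sum_sub_distrib]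
  exact Finset.sum_congr rfl fun p _ => key (e p)

lemma count_two {α : Type*} (T : Finset α) (e1 e2 : α → ZMod 2) :
    4 * ((T.filter (fun p => e1 p = 1 ∧ e2 p = 1)).card : ℤ)
      = T.card - ∑ p ∈ T, sgn (e1 p) - ∑ p ∈ T, sgn (e2 p) + ∑ p ∈ T, sgn (e1 p + e2 p) := by
  have key : ∀ a b : ZMod 2, 4 * (if a = 1 ∧ b = 1 then (1:ℤ) else 0)
      = 1 - sgn a - sgn b + sgn (a + b) := by decide
  rw [Finset.card_filter]
  push_cast
  rw [Finset.mul_sum, show ((T.card : ℤ)) = ∑ p ∈ T, (1:ℤ) by simp,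
    ← Finset.sum_sub_distrib, ← Finset.sum_sub_distrib, ← Finset.sum_add_distrib]
  exact Finset.sum_congr rfl fun p _ => key (e1 p) (e2 p)

lemma dotp_zero_right {m : ℕ} (u : Fin m → ZMod 2) : dotp u 0 = 0 := by simp [dotp]

lemma card_univ_V (m : ℕ) : ((Finset.univ : Finset (Fin m → ZMod 2)).card : ℤ) = 2 ^ m := by
  simp [Finset.card_univ]

lemma hz4 (x y s u v : ZMod 2) : (x + s + u) + (y + s + v) = (x + y) + (u + v) := by
  revert x y s u v; decide

lemma hz5 (x y u v s : ZMod 2) : (x + u + s) + (y + v + s) = (x + y) + (u + v) := by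
  revert x y u v s; decide

lemma pow_succ_eq (a b : ℕ) (hab : a = b + 1) : (2:ℤ) ^ a = 2 ^ b * 2 := by
  rw [hab, pow_succ]

lemma pow_add2_eq (a b : ℕ) (hab : a = b + 2) : (2:ℤ) ^ a = 2 ^ b * 4 := by
  rw [hab, pow_add]; norm_num

theorem stmt_8 (m r : ℕ) (hrm : r < m) (hpar : Even (m + r))
    (f : (Fin m → ZMod 2) → ZMod 2)
    (hplat : ∀ a, walshF f a = 0 ∨ walshF f a = 2 ^ ((m + r) / 2) ∨
      walshF f a = -2 ^ ((m + r) / 2))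
    (g : (Fin m → ZMod 2) → ZMod 2)
    (hg : ∀ x ∈ walshSupp f, walshF f x = sgn (g x) * 2 ^ ((m + r) / 2)) :
    ((walshSupp f).card = 2 ^ (m - r)) ∧
    (∀ b : Fin m → ZMod 2,
      ((addBlock f g b).card : ℤ) = 2 ^ (m - r - 1) - 2 ^ ((m - r - 2) / 2)) ∧
    (∀ p ∈ walshSupp f,
      ((Finset.univ.filter (fun b => p ∈ addBlock f g b)).card : ℤ)
        = 2 ^ (m - 1) - 2 ^ ((m + r - 2) / 2)) ∧
    (∀ p ∈ walshSupp f, ∀ q ∈ walshSupp f, p ≠ q →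
      ((Finset.univ.filter (fun b => p ∈ addBlock f g b ∧ q ∈ addBlock f g b)).card : ℤ)
        = 2 ^ (m - 2) - 2 ^ ((m + r - 2) / 2)) ∧
    (∀ a b : Fin m → ZMod 2,
      2 ^ (r + 2) * ((addBlock f g a ∩ addBlock f g b).card : ℤ)
        = 2 ^ m - 2 ^ ((m + r + 2) / 2) + sgn (f a + f b) * autocorr f (a + b)) := by
  clear hplat
  obtain ⟨h, hh⟩ : ∃ h, m + r = 2 * h := by
    obtain ⟨t, ht⟩ := hpar; exact ⟨t, by omega⟩
  rw [show (m + r) / 2 = h from by omega] at hg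
  -- squared Walsh value on the support
  have hW2 : ∀ u ∈ walshSupp f, walshF f u ^ 2 = 2 ^ (m + r) := by
    intro u hu
    rw [hg u hu, mul_pow, sq (sgn (g u)), sgn_sq', one_mul, ← pow_mul]
    congr 1
    omega
  -- autocorrelation at 0
  have hzadd : ∀ a : ZMod 2, a + a = 0 := by decide
  have hauto0 : autocorr f 0 = 2 ^ m := by
    rw [autocorr]
    have : ∀ x : Fin m → ZMod 2, sgn (f x + f (x + 0)) = 1 := by
      intro x; rw [add_zero, hzadd]; rfl
    rw [Finset.sum_congr rfl fun x _ => this x]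
    simpa using card_univ_V m
  -- Parseval: cardinality of the support
  have hcardZ : ((walshSupp f).card : ℤ) = 2 ^ (m - r) := by
    have e1 := sum_supp_sq f (fun _ => 1)
    simp only [mul_one] at e1
    have e2 : ∑ u : Fin m → ZMod 2, walshF f u ^ 2
        = ∑ u : Fin m → ZMod 2, walshF f u ^ 2 * sgn (dotp u 0) := by
      refine Finset.sum_congr rfl fun u _ => ?_
      rw [dotp_zero_right]
      show _ = _ * 1
      ring
    rw [e2, autocorr_rel, hauto0] at e1
    have e3 : ∑ u ∈ walshSupp f, walshF f u ^ 2
        = ((walshSupp f).card : ℤ) * 2 ^ (m + r) := by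
      rw [Finset.sum_congr rfl hW2, Finset.sum_const, nsmul_eq_mul]
    rw [e3] at e1
    have e4 : (2 : ℤ) ^ m * 2 ^ m = 2 ^ (m - r) * 2 ^ (m + r) := by
      rw [← pow_add, ← pow_add]; congr 1; omega
    exact mul_right_cancel₀ (pow_ne_zero _ two_ne_zero) (e1.trans e4)
  have hcardN : (walshSupp f).card = 2 ^ (m - r) := by exact_mod_cast hcardZ
  -- key sum S2
  have hS2 : ∀ b : Fin m → ZMod 2,
      ∑ p ∈ walshSupp f, sgn (g p) * sgn (dotp p b) = 2 ^ (m - h) * sgn (f b) := by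
    intro b
    have e1 := sum_supp_mul f (fun u => sgn (dotp u b))
    rw [inversion] at e1
    have e2 : ∑ u ∈ walshSupp f, walshF f u * sgn (dotp u b)
        = 2 ^ h * ∑ p ∈ walshSupp f, sgn (g p) * sgn (dotp p b) := by
      rw [Finset.mul_sum]
      refine Finset.sum_congr rfl fun u hu => ?_
      rw [hg u hu]; ring
    rw [e2] at e1
    have e3 : (2 : ℤ) ^ m * sgn (f b) = 2 ^ h * (2 ^ (m - h) * sgn (f b)) := by
      rw [show (2:ℤ) ^ m = 2 ^ h * 2 ^ (m - h) from by rw [← pow_add]; congr 1; omega]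
      ring
    exact mul_left_cancel₀ (pow_ne_zero _ two_ne_zero) (e1.trans e3)
  -- key sum S3
  have hS3 : ∀ c : Fin m → ZMod 2,
      2 ^ r * ∑ p ∈ walshSupp f, sgn (dotp p c) = autocorr f c := by
    intro c
    have e1 := sum_supp_sq f (fun u => sgn (dotp u c))
    rw [autocorr_rel] at e1
    have e2 : ∑ u ∈ walshSupp f, walshF f u ^ 2 * sgn (dotp u c)
        = 2 ^ m * (2 ^ r * ∑ p ∈ walshSupp f, sgn (dotp p c)) := by
      rw [Finset.mul_sum, Finset.mul_sum]
      refine Finset.sum_congr rfl fun u hu => ?_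
      rw [hW2 u hu, show m + r = m + r from rfl,
        show (2:ℤ) ^ (m + r) = 2 ^ m * 2 ^ r from by rw [← pow_add]]
      ring
    rw [e2] at e1
    exact mul_left_cancel₀ (pow_ne_zero _ two_ne_zero) e1
  -- block sum
  have hblocksum : ∀ b : Fin m → ZMod 2,
      ∑ p ∈ walshSupp f, sgn (dotp b p + f b + g p) = 2 ^ (m - h) := by
    intro b
    have e : ∀ p : Fin m → ZMod 2,
        sgn (dotp b p + f b + g p) = sgn (f b) * (sgn (g p) * sgn (dotp p b)) := by
      intro p
      rw [sgn_add', sgn_add', dotp_comm]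
      ring
    rw [Finset.sum_congr rfl fun p _ => e p, ← Finset.mul_sum, hS2 b,
      show sgn (f b) * (2 ^ (m-h) * sgn (f b)) = 2 ^ (m-h) * (sgn (f b) * sgn (f b)) from by ring,
      sgn_sq', mul_one]
  -- part (2)
  have part2 : ∀ b : Fin m → ZMod 2,
      ((addBlock f g b).card : ℤ) = 2 ^ (m - r - 1) - 2 ^ ((m - r - 2) / 2) := by
    intro b
    have hc := count_one (walshSupp f) (fun p => dotp b p + f b + g p)
    rw [show (walshSupp f).filter (fun p => dotp b p + f b + g p = 1) = addBlock f g b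
      from rfl, hblocksum b, hcardZ] at hc
    have E1 : (2:ℤ) ^ (m - r) = 2 ^ (m - r - 1) * 2 := pow_succ_eq _ _ (by omega)
    have E2 : (2:ℤ) ^ (m - h) = 2 ^ ((m - r - 2) / 2) * 2 := pow_succ_eq _ _ (by omega)
    linarith
  -- pointwise sum over b for fixed p in the support
  have hptsum : ∀ p ∈ walshSupp f,
      ∑ b : Fin m → ZMod 2, sgn (dotp b p + f b + g p) = 2 ^ h := by
    intro p hp
    have e : ∀ b : Fin m → ZMod 2,
        sgn (dotp b p + f b + g p) = sgn (g p) * sgn (f b + dotp p b) := by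
      intro b
      rw [sgn_add', sgn_add', sgn_add', dotp_comm]
      ring
    rw [Finset.sum_congr rfl fun b _ => e b, ← Finset.mul_sum,
      show ∑ b : Fin m → ZMod 2, sgn (f b + dotp p b) = walshF f p from rfl, hg p hp,
      show sgn (g p) * (sgn (g p) * 2 ^ h) = (sgn (g p) * sgn (g p)) * 2 ^ h from by ring,
      sgn_sq', one_mul]
  -- part (3)
  have part3 : ∀ p ∈ walshSupp f,
      ((Finset.univ.filter (fun b => p ∈ addBlock f g b)).card : ℤ)
        = 2 ^ (m - 1) - 2 ^ ((m + r - 2) / 2) := by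
    intro p hp
    have hfe : Finset.univ.filter (fun b => p ∈ addBlock f g b)
        = Finset.univ.filter (fun b : Fin m → ZMod 2 => dotp b p + f b + g p = 1) := by
      refine Finset.filter_congr fun b _ => ?_
      simp [addBlock, Finset.mem_filter, hp]
    have hc := count_one (Finset.univ : Finset (Fin m → ZMod 2))
      (fun b => dotp b p + f b + g p)
    rw [hptsum p hp, card_univ_V m] at hc
    rw [hfe]
    have E1 : (2:ℤ) ^ m = 2 ^ (m - 1) * 2 := pow_succ_eq _ _ (by omega)
    have E2 : (2:ℤ) ^ h = 2 ^ ((m + r - 2) / 2) * 2 := pow_succ_eq _ _ (by omega)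
    linarith
  -- part (4)
  have part4 : ∀ p ∈ walshSupp f, ∀ q ∈ walshSupp f, p ≠ q →
      ((Finset.univ.filter (fun b => p ∈ addBlock f g b ∧ q ∈ addBlock f g b)).card : ℤ)
        = 2 ^ (m - 2) - 2 ^ ((m + r - 2) / 2) := by
    intro p hp q hq hpq
    have hfe : Finset.univ.filter (fun b => p ∈ addBlock f g b ∧ q ∈ addBlock f g b)
        = Finset.univ.filter (fun b : Fin m → ZMod 2 =>
            dotp b p + f b + g p = 1 ∧ dotp b q + f b + g q = 1) := by
      refine Finset.filter_congr fun b _ => ?_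
      simp [addBlock, Finset.mem_filter, hp, hq]
    have hc := count_two (Finset.univ : Finset (Fin m → ZMod 2))
      (fun b => dotp b p + f b + g p) (fun b => dotp b q + f b + g q)
    rw [hptsum p hp, hptsum q hq, card_univ_V m] at hc
    have hthird : ∑ b : Fin m → ZMod 2,
        sgn ((dotp b p + f b + g p) + (dotp b q + f b + g q)) = 0 := by
      have e : ∀ b : Fin m → ZMod 2,
          sgn ((dotp b p + f b + g p) + (dotp b q + f b + g q))
            = sgn (g p + g q) * sgn (dotp (p + q) b) := by
        intro b
        rw [hz4 (dotp b p) (dotp b q) (f b) (g p) (g q), ← dotp_add_right, sgn_add',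
          dotp_comm b (p + q)]
        ring
      rw [Finset.sum_congr rfl fun b _ => e b, ← Finset.mul_sum, char_sum]
      have : p + q ≠ 0 := fun hc0 => hpq ((add_eq_zero_iff2 p q).mp hc0)
      rw [if_neg this, mul_zero]
    rw [hthird] at hc
    rw [hfe]
    have E1 : (2:ℤ) ^ m = 2 ^ (m - 2) * 4 := pow_add2_eq _ _ (by omega)
    have E2 : (2:ℤ) ^ h = 2 ^ ((m + r - 2) / 2) * 2 := pow_succ_eq _ _ (by omega)
    linarith
  -- part (5)
  have part5 : ∀ a b : Fin m → ZMod 2,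
      2 ^ (r + 2) * ((addBlock f g a ∩ addBlock f g b).card : ℤ)
        = 2 ^ m - 2 ^ ((m + r + 2) / 2) + sgn (f a + f b) * autocorr f (a + b) := by
    intro a b
    have hinter : addBlock f g a ∩ addBlock f g b
        = (walshSupp f).filter (fun p =>
            dotp a p + f a + g p = 1 ∧ dotp b p + f b + g p = 1) := by
      ext p
      simp only [addBlock, Finset.mem_inter, Finset.mem_filter]
      tauto
    have hc := count_two (walshSupp f)
      (fun p => dotp a p + f a + g p) (fun p => dotp b p + f b + g p)
    rw [hblocksum a, hblocksum b, hcardZ, ← hinter] at hc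
    have hthird : ∑ p ∈ walshSupp f,
        sgn ((dotp a p + f a + g p) + (dotp b p + f b + g p))
          = sgn (f a + f b) * ∑ p ∈ walshSupp f, sgn (dotp p (a + b)) := by
      rw [Finset.mul_sum]
      refine Finset.sum_congr rfl fun p _ => ?_
      rw [hz5 (dotp a p) (dotp b p) (f a) (f b) (g p), ← dotp_add_left, sgn_add',
        dotp_comm (a + b) p]
      ring
    rw [hthird] at hc
    have hT := hS3 (a + b)
    have E1 : (2:ℤ) ^ (r + 2) = 4 * 2 ^ r := by rw [pow_add]; ring
    have E2 : (2:ℤ) ^ r * 2 ^ (m - r) = 2 ^ m := by rw [← pow_add]; congr 1; omega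
    have E3 : (2:ℤ) ^ ((m + r + 2) / 2) = 2 * (2 ^ r * 2 ^ (m - h)) := by
      rw [show (m + r + 2) / 2 = (r + (m - h)) + 1 from by omega, pow_succ, pow_add]
      ring
    linear_combination (((addBlock f g a ∩ addBlock f g b).card : ℤ)) * E1
      + 2 ^ r * hc + E2 + E3 + sgn (f a + f b) * hT
  exact ⟨hcardN, part2, part3, part4, part5⟩
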